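/- Let ψ, ξ : ℝ → ℝ be C^∞ functions and a ∈ ℝ, and define f : ℝ² → ℝ by f(q₁, q₂) = ψ(q₂)·cos q₁ + ξ(q₂) + a·(q₁² − q₂²). Then f satisfies the PDE (P) at every point of ℝ² if and only if both of the following hold for every y ∈ ℝ: (i) ξ″(y)·ψ″(y) + (ξ″·ψ′)′(y) = 2a·(ψ″(y) − ψ(y)), and (ii) ψ′(y)·ψ‴(y) = ψ(y)·ψ″(y) − 2·ψ″(y)² + ψ′(y)² + ψ(y)². -/

import Mathlib

/-- First partial derivative of a function of two real variables. -/
noncomputable def pd1 (f : ℝ → ℝ → ℝ) (a b : ℝ) : ℝ := deriv (fun x => f x b) a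

/-- Second partial derivative of a function of two real variables. -/
noncomputable def pd2 (f : ℝ → ℝ → ℝ) (a b : ℝ) : ℝ := deriv (fun y => f a y) b

/-- The PDE (P):
∂/∂q₁[(f_{q₁q₁} − f_{q₂q₂})·(f_{q₁q₁} + f_{q₂q₂})] = 2·∂/∂q₂[f_{q₁q₂}·(f_{q₁q₁} + f_{q₂q₂})]. -/
def PDE_P (f : ℝ → ℝ → ℝ) : Prop :=
  ∀ a b : ℝ,
    pd1 (fun x y => (pd1 (pd1 f) x y - pd2 (pd2 f) x y) *
        (pd1 (pd1 f) x y + pd2 (pd2 f) x y)) a b =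
      2 * pd2 (fun x y => pd2 (pd1 f) x y *
        (pd1 (pd1 f) x y + pd2 (pd2 f) x y)) a b

theorem stmt5 (ψ ξ : ℝ → ℝ) (hψ : ContDiff ℝ (⊤ : ℕ∞) ψ) (hξ : ContDiff ℝ (⊤ : ℕ∞) ξ) (a : ℝ) :
    PDE_P (fun q₁ q₂ => ψ q₂ * Real.cos q₁ + ξ q₂ + a * (q₁ ^ 2 - q₂ ^ 2)) ↔
      ((∀ y : ℝ, deriv (deriv ξ) y * deriv (deriv ψ) y +
          deriv (fun z => deriv (deriv ξ) z * deriv ψ z) y =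
            2 * a * (deriv (deriv ψ) y - ψ y)) ∧
       (∀ y : ℝ, deriv ψ y * deriv (deriv (deriv ψ)) y =
          ψ y * deriv (deriv ψ) y - 2 * (deriv (deriv ψ) y) ^ 2 +
            (deriv ψ y) ^ 2 + (ψ y) ^ 2)) := by
  have hψ' : ContDiff ℝ (⊤ : ℕ∞) ψ := hψ.of_le (by simp)
  have hξ' : ContDiff ℝ (⊤ : ℕ∞) ξ := hξ.of_le (by simp)
  have hψd : Differentiable ℝ ψ := hψ'.differentiable (by simp)
  have hψ1 : ContDiff ℝ (⊤ : ℕ∞) (deriv ψ) := (contDiff_infty_iff_deriv.mp hψ').2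
  have hψ1d : Differentiable ℝ (deriv ψ) := hψ1.differentiable (by simp)
  have hψ2 : ContDiff ℝ (⊤ : ℕ∞) (deriv (deriv ψ)) := (contDiff_infty_iff_deriv.mp hψ1).2
  have hψ2d : Differentiable ℝ (deriv (deriv ψ)) := hψ2.differentiable (by simp)
  have hξd : Differentiable ℝ ξ := hξ'.differentiable (by simp)
  have hξ1 : ContDiff ℝ (⊤ : ℕ∞) (deriv ξ) := (contDiff_infty_iff_deriv.mp hξ').2
  have hξ1d : Differentiable ℝ (deriv ξ) := hξ1.differentiable (by simp)
  have hξ2 : ContDiff ℝ (⊤ : ℕ∞) (deriv (deriv ξ)) := (contDiff_infty_iff_deriv.mp hξ1).2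
  have hξ2d : Differentiable ℝ (deriv (deriv ξ)) := hξ2.differentiable (by simp)
  set F : ℝ → ℝ → ℝ := fun q₁ q₂ => ψ q₂ * Real.cos q₁ + ξ q₂ + a * (q₁ ^ 2 - q₂ ^ 2) with hF
  -- first partial in q₁
  have e1 : pd1 F = fun x y => -(ψ y * Real.sin x) + 2 * a * x := by
    funext x y
    have h1 : HasDerivAt (fun x => F x y) (-(ψ y * Real.sin x) + 2 * a * x) x := by
      have hc : HasDerivAt (fun x : ℝ => ψ y * Real.cos x) (ψ y * -Real.sin x) x :=
        (Real.hasDerivAt_cos x).const_mul (ψ y)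
      have hp : HasDerivAt (fun x : ℝ => a * (x ^ 2 - y ^ 2)) (a * (↑2 * x ^ 1)) x :=
        ((hasDerivAt_pow 2 x).sub_const (y ^ 2)).const_mul a
      have := (hc.add_const (ξ y)).fun_add hp
      refine this.congr_deriv ?_
      ring
    exact h1.deriv
  have e11 : pd1 (pd1 F) = fun x y => -(ψ y * Real.cos x) + 2 * a := by
    rw [e1]; funext x y
    have h1 : HasDerivAt (fun x => -(ψ y * Real.sin x) + 2 * a * x)
        (-(ψ y * Real.cos x) + 2 * a) x := by
      have hs : HasDerivAt (fun x : ℝ => ψ y * Real.sin x) (ψ y * Real.cos x) x :=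
        (Real.hasDerivAt_sin x).const_mul (ψ y)
      have hl : HasDerivAt (fun x : ℝ => 2 * a * x) (2 * a) x := by
        simpa using (hasDerivAt_id x).const_mul (2 * a)
      exact hs.neg.add hl
    exact h1.deriv
  have e12 : pd2 (pd1 F) = fun x y => -(deriv ψ y * Real.sin x) := by
    rw [e1]; funext x y
    have h1 : HasDerivAt (fun y => -(ψ y * Real.sin x) + 2 * a * x)
        (-(deriv ψ y * Real.sin x)) y := by
      simpa using (((hψd y).hasDerivAt.mul_const (Real.sin x)).neg).add_const (2 * a * x)
    exact h1.deriv
  have e2 : pd2 F = fun x y => deriv ψ y * Real.cos x + deriv ξ y - 2 * a * y := by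
    funext x y
    have h1 : HasDerivAt (fun y => F x y)
        (deriv ψ y * Real.cos x + deriv ξ y - 2 * a * y) y := by
      have hp : HasDerivAt (fun y : ℝ => a * (x ^ 2 - y ^ 2)) (a * -(↑2 * y ^ 1)) y :=
        ((hasDerivAt_pow 2 y).const_sub (x ^ 2)).const_mul a
      have := (((hψd y).hasDerivAt.mul_const (Real.cos x)).fun_add (hξd y).hasDerivAt).fun_add hp
      refine this.congr_deriv ?_
      ring
    exact h1.deriv
  have e22 : pd2 (pd2 F) =
      fun x y => deriv (deriv ψ) y * Real.cos x + deriv (deriv ξ) y - 2 * a := by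
    rw [e2]; funext x y
    have h1 : HasDerivAt (fun y => deriv ψ y * Real.cos x + deriv ξ y - 2 * a * y)
        (deriv (deriv ψ) y * Real.cos x + deriv (deriv ξ) y - 2 * a) y := by
      have hl : HasDerivAt (fun y : ℝ => 2 * a * y) (2 * a) y := by
        simpa using (hasDerivAt_id y).const_mul (2 * a)
      exact (((hψ1d y).hasDerivAt.mul_const (Real.cos x)).add (hξ1d y).hasDerivAt).sub hl
    exact h1.deriv
  -- left-hand side of the PDE
  have eL : pd1 (fun x y => (pd1 (pd1 F) x y - pd2 (pd2 F) x y) *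
      (pd1 (pd1 F) x y + pd2 (pd2 F) x y)) =
      fun x y =>
        (ψ y * Real.sin x + deriv (deriv ψ) y * Real.sin x) *
          ((-(ψ y * Real.cos x) + 2 * a) +
            (deriv (deriv ψ) y * Real.cos x + deriv (deriv ξ) y - 2 * a)) +
        ((-(ψ y * Real.cos x) + 2 * a) -
            (deriv (deriv ψ) y * Real.cos x + deriv (deriv ξ) y - 2 * a)) *
          (ψ y * Real.sin x - deriv (deriv ψ) y * Real.sin x) := by
    simp only [e11, e22]
    funext x y
    have hU : HasDerivAt (fun x => (-(ψ y * Real.cos x) + 2 * a) -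
        (deriv (deriv ψ) y * Real.cos x + deriv (deriv ξ) y - 2 * a))
        (ψ y * Real.sin x + deriv (deriv ψ) y * Real.sin x) x := by
      have h1 : HasDerivAt (fun x : ℝ => ψ y * Real.cos x) (ψ y * -Real.sin x) x :=
        (Real.hasDerivAt_cos x).const_mul (ψ y)
      have h2 : HasDerivAt (fun x : ℝ => deriv (deriv ψ) y * Real.cos x)
          (deriv (deriv ψ) y * -Real.sin x) x :=
        (Real.hasDerivAt_cos x).const_mul (deriv (deriv ψ) y)
      have := (h1.neg.add_const (2 * a)).fun_sub ((h2.add_const (deriv (deriv ξ) y)).sub_const (2 * a))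
      refine this.congr_deriv ?_; ring
    have hV : HasDerivAt (fun x => (-(ψ y * Real.cos x) + 2 * a) +
        (deriv (deriv ψ) y * Real.cos x + deriv (deriv ξ) y - 2 * a))
        (ψ y * Real.sin x - deriv (deriv ψ) y * Real.sin x) x := by
      have h1 : HasDerivAt (fun x : ℝ => ψ y * Real.cos x) (ψ y * -Real.sin x) x :=
        (Real.hasDerivAt_cos x).const_mul (ψ y)
      have h2 : HasDerivAt (fun x : ℝ => deriv (deriv ψ) y * Real.cos x)
          (deriv (deriv ψ) y * -Real.sin x) x :=
        (Real.hasDerivAt_cos x).const_mul (deriv (deriv ψ) y)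
      have := (h1.neg.add_const (2 * a)).fun_add ((h2.add_const (deriv (deriv ξ) y)).sub_const (2 * a))
      refine this.congr_deriv ?_; ring
    exact (hU.mul hV).deriv
  -- right-hand side of the PDE
  have eR : pd2 (fun x y => pd2 (pd1 F) x y *
      (pd1 (pd1 F) x y + pd2 (pd2 F) x y)) =
      fun x y =>
        (-(deriv (deriv ψ) y * Real.sin x)) *
          ((-(ψ y * Real.cos x) + 2 * a) +
            (deriv (deriv ψ) y * Real.cos x + deriv (deriv ξ) y - 2 * a)) +
        (-(deriv ψ y * Real.sin x)) *
          ((-(deriv ψ y * Real.cos x)) +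
            (deriv (deriv (deriv ψ)) y * Real.cos x + deriv (deriv (deriv ξ)) y)) := by
    simp only [e11, e22, e12]
    funext x y
    have hU : HasDerivAt (fun y => -(deriv ψ y * Real.sin x))
        (-(deriv (deriv ψ) y * Real.sin x)) y :=
      ((hψ1d y).hasDerivAt.mul_const (Real.sin x)).neg
    have hV : HasDerivAt (fun y => (-(ψ y * Real.cos x) + 2 * a) +
        (deriv (deriv ψ) y * Real.cos x + deriv (deriv ξ) y - 2 * a))
        ((-(deriv ψ y * Real.cos x)) +
          (deriv (deriv (deriv ψ)) y * Real.cos x + deriv (deriv (deriv ξ)) y)) y := by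
      have h1 : HasDerivAt (fun y => ψ y * Real.cos x) (deriv ψ y * Real.cos x) y :=
        (hψd y).hasDerivAt.mul_const (Real.cos x)
      have h2 : HasDerivAt (fun y => deriv (deriv ψ) y * Real.cos x)
          (deriv (deriv (deriv ψ)) y * Real.cos x) y :=
        (hψ2d y).hasDerivAt.mul_const (Real.cos x)
      exact (h1.neg.add_const (2 * a)).add ((h2.add (hξ2d y).hasDerivAt).sub_const (2 * a))
    exact (hU.mul hV).deriv
  -- product-rule expansion in condition (i)
  have eprod : ∀ y : ℝ, deriv (fun z => deriv (deriv ξ) z * deriv ψ z) y =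
      deriv (deriv (deriv ξ)) y * deriv ψ y + deriv (deriv ξ) y * deriv (deriv ψ) y :=
    fun y => ((hξ2d y).hasDerivAt.mul (hψ1d y).hasDerivAt).deriv
  unfold PDE_P
  simp only [eL, eR, eprod]
  constructor
  · intro h
    have hB : ∀ y : ℝ, 2 * (deriv (deriv ξ) y * deriv (deriv ψ) y) +
        deriv (deriv (deriv ξ)) y * deriv ψ y = 2 * a * (deriv (deriv ψ) y - ψ y) := by
      intro y
      have h2 := h (Real.pi / 2) y
      simp only [Real.sin_pi_div_two, Real.cos_pi_div_two] at h2
      linear_combination (1 / 2) * h2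
    constructor
    · intro y
      linear_combination hB y
    · intro y
      have h4 := h (Real.pi / 4) y
      simp only [Real.sin_pi_div_four, Real.cos_pi_div_four] at h4
      have hs2 : Real.sqrt 2 ^ 2 = 2 := Real.sq_sqrt (by norm_num)
      have hB' := hB y
      nlinarith [h4, hB', hs2, Real.sqrt_nonneg 2]
  · rintro ⟨h1, h2⟩ x y
    have h1' := h1 y
    have h2' := h2 y
    linear_combination (2 * Real.sin x * Real.cos x) * h2' + (2 * Real.sin x) * h1'
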